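/- arXiv:2502.02860 — 2 statements merged into one kernel-verified Lean document; each statement's English description precedes it below -/
import Mathlib

section
/- For any density matrix ρ with diagonal part τ (the decoherent state obtained by zeroing all off-diagonal entries), the battery capacity satisfies C(ρ; H) ≥ C(τ; H). -/
open Matrix Finset
open scoped Kronecker

/-- Sort a finite real vector in descending order. -/
noncomputable def dsort {d : ℕ} (v : Fin d → ℝ) : Fin d → ℝ :=
  fun i => v (Tuple.sort v i.rev)

/-- Battery capacity functional for descending-ordered vectors:
`cap λ ε = ∑ i, ε i * (λ i - λ (d-1-i))`. -/
noncomputable def cap {d : ℕ} (lam eps : Fin d → ℝ) : ℝ :=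
  ∑ i, eps i * (lam i - lam i.rev)

/-- Eigenvalues of a Hermitian matrix, in descending order. -/
noncomputable def eigsDesc {m : Type*} [Fintype m] [DecidableEq m] {A : Matrix m m ℂ}
    (hA : A.IsHermitian) : Fin (Fintype.card m) → ℝ :=
  dsort (hA.eigenvalues ∘ (Fintype.equivFin m).symm)

open scoped Classical in
/-- Quantum battery capacity `C(ρ; H)` (defaults to `0` on non-Hermitian inputs). -/
noncomputable def Cap {m : Type*} [Fintype m] [DecidableEq m] (ρ H : Matrix m m ℂ) : ℝ :=
  if hρ : ρ.IsHermitian then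
    if hH : H.IsHermitian then cap (eigsDesc hρ) (eigsDesc hH) else 0
  else 0

/-- Majorization `x ≺ y` of real vectors. -/
noncomputable def Maj {d : ℕ} (x y : Fin d → ℝ) : Prop :=
  (∀ k : ℕ, ∑ i : Fin d, (if (i : ℕ) < k then dsort x i else 0)
      ≤ ∑ i : Fin d, (if (i : ℕ) < k then dsort y i else 0)) ∧
  ∑ i, x i = ∑ i, y i

def σ1 : Matrix (Fin 2) (Fin 2) ℂ := !![0, 1; 1, 0]
def σ3 : Matrix (Fin 2) (Fin 2) ℂ := !![1, 0; 0, -1]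

open scoped ComplexOrder

/-! The diagonal of `ρ = V diag(μ) V⋆` is `B μ` with `B i j = |V i j|²` doubly stochastic, and
likewise the spectrum of the decoherent state `τ` is a doubly stochastic image of that diagonal.
Hence `spec τ = B' (spec ρ)` for a doubly stochastic `B'`. With `λ` sorted decreasingly,
`C(λ; H) = ∑ i, (εᵢ - ε_{d-1-i}) λᵢ` has decreasing weights, so by Birkhoff's theorem
`C(B' x) ≤ C(x)` reduces to permutation matrices, where it is the rearrangement inequality. -/

section Rearrangement

variable {n R : Type*} [Fintype n] [DecidableEq n]
  [Field R] [LinearOrder R] [IsStrictOrderedRing R]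

theorem Monovary.sum_mul_mulVec_le_sum_mul {f g : n → R} (hfg : Monovary f g)
    {M : Matrix n n R} (hM : M ∈ doublyStochastic R n) :
    ∑ i, f i * (M *ᵥ g) i ≤ ∑ i, f i * g i := by
  let φ : Matrix n n R →ₗ[R] R :=
    { toFun := fun N => ∑ i, f i * (N *ᵥ g) i
      map_add' := fun N N' => by simp [add_mulVec, mul_add, sum_add_distrib]
      map_smul' := fun c N => by simp [smul_mulVec, mul_sum, mul_left_comm] }
  rw [← SetLike.mem_coe, doublyStochastic_eq_convexHull_permMatrix] at hM
  refine convexHull_min ?_ (convex_halfSpace_le φ.isLinear _) hM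
  rintro _ ⟨σ, rfl⟩
  simpa [φ, permMatrix_mulVec] using hfg.sum_mul_comp_perm_le_sum_mul

end Rearrangement

theorem dsort_eq_comp {d : ℕ} (v : Fin d → ℝ) :
    dsort v = v ∘ (Fin.revPerm.trans (Tuple.sort v)) :=
  rfl

theorem antitone_dsort {d : ℕ} (v : Fin d → ℝ) : Antitone (dsort v) :=
  fun _ _ hij => Tuple.monotone_sort v (Fin.rev_le_rev.mpr hij)

theorem exists_dsort_mulVec_eq {d : ℕ} {M : Matrix (Fin d) (Fin d) ℝ}
    (hM : M ∈ doublyStochastic ℝ (Fin d)) (x : Fin d → ℝ) :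
    ∃ N ∈ doublyStochastic ℝ (Fin d), dsort (M *ᵥ x) = N *ᵥ dsort x := by
  set σ : Equiv.Perm (Fin d) := Fin.revPerm.trans (Tuple.sort (M *ᵥ x))
  set τ : Equiv.Perm (Fin d) := Fin.revPerm.trans (Tuple.sort x)
  refine ⟨σ.permMatrix ℝ * M * τ⁻¹.permMatrix ℝ,
    mul_mem (mul_mem permMatrix_mem_doublyStochastic hM) permMatrix_mem_doublyStochastic, ?_⟩
  rw [← mulVec_mulVec, ← mulVec_mulVec, permMatrix_mulVec, permMatrix_mulVec, dsort_eq_comp,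
    dsort_eq_comp, Function.comp_assoc, Equiv.Perm.coe_inv, Equiv.self_comp_symm,
    Function.comp_id]

theorem sum_mul_dsort_mulVec_le {d : ℕ} {f : Fin d → ℝ} (hf : Antitone f)
    {M : Matrix (Fin d) (Fin d) ℝ} (hM : M ∈ doublyStochastic ℝ (Fin d)) (x : Fin d → ℝ) :
    ∑ i, f i * dsort (M *ᵥ x) i ≤ ∑ i, f i * dsort x i := by
  obtain ⟨N, hN, hsort⟩ := exists_dsort_mulVec_eq hM x
  rw [hsort]
  exact (hf.monovary (antitone_dsort x)).sum_mul_mulVec_le_sum_mul hN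

theorem cap_eq_sum_mul {d : ℕ} (lam eps : Fin d → ℝ) :
    cap lam eps = ∑ i, (eps i - eps i.rev) * lam i := by
  have hrev : ∑ i, eps i * lam i.rev = ∑ i, eps i.rev * lam i :=
    Fintype.sum_equiv Fin.revPerm _ _ (fun i => by simp)
  simp only [cap, mul_sub, sub_mul, sum_sub_distrib, hrev]

theorem cap_dsort_mulVec_le {d : ℕ} {eps : Fin d → ℝ} (heps : Antitone eps)
    {M : Matrix (Fin d) (Fin d) ℝ} (hM : M ∈ doublyStochastic ℝ (Fin d)) (x : Fin d → ℝ) :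
    cap (dsort (M *ᵥ x)) eps ≤ cap (dsort x) eps := by
  have hf : Antitone fun i => eps i - eps i.rev :=
    fun i j hij => sub_le_sub (heps hij) (heps (Fin.rev_le_rev.mpr hij))
  simpa only [cap_eq_sum_mul] using sum_mul_dsort_mulVec_le hf hM x

namespace Matrix

variable {m : Type*} [Fintype m] [DecidableEq m]

theorem re_mul_diagonal_mul_star_apply_self (V : Matrix m m ℂ) (v : m → ℂ) (i : m) :
    ((V * diagonal v * star V) i i).re = (V.map Complex.normSq *ᵥ fun j => (v j).re) i := by
  have hterm (j : m) : V i j * v j * star (V i j) = (Complex.normSq (V i j) : ℂ) * v j := by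
    rw [mul_right_comm, Complex.star_def, Complex.mul_conj]
  rw [mul_apply]
  simp only [mul_diagonal, star_apply, hterm, Complex.re_sum, Complex.re_ofReal_mul]
  rfl

theorem sum_normSq_apply_eq_one {V : Matrix m m ℂ} (hV : V * star V = 1) (i : m) :
    ∑ j, Complex.normSq (V i j) = 1 := by
  simpa [mul_apply, Complex.re_sum, Complex.mul_conj] using
    congrArg Complex.re (congrFun (congrFun hV i) i)

theorem map_normSq_mem_doublyStochastic {V : Matrix m m ℂ} (hV : V ∈ unitaryGroup m ℂ) :
    V.map Complex.normSq ∈ doublyStochastic ℝ m := by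
  refine mem_doublyStochastic_iff_sum.2 ⟨fun _ _ => Complex.normSq_nonneg _,
    sum_normSq_apply_eq_one (mem_unitaryGroup_iff.1 hV), ?_⟩
  simpa using sum_normSq_apply_eq_one (mem_unitaryGroup_iff.1 (Unitary.star_mem hV))

end Matrix

namespace Matrix.IsHermitian

variable {m : Type*} [Fintype m] [DecidableEq m]

theorem exists_re_diag_eq_mulVec_eigenvalues {A : Matrix m m ℂ} (hA : A.IsHermitian) :
    ∃ B ∈ doublyStochastic ℝ m, (fun i => (A i i).re) = B *ᵥ hA.eigenvalues := by
  refine ⟨_, map_normSq_mem_doublyStochastic hA.eigenvectorUnitary.2, funext fun i => ?_⟩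
  conv_lhs => rw [hA.spectral_theorem, Unitary.conjStarAlgAut_apply]
  rw [re_mul_diagonal_mul_star_apply_self]
  simp

theorem exists_eigenvalues_eq_mulVec_re_diag {v : m → ℂ} (h : (diagonal v).IsHermitian) :
    ∃ B ∈ doublyStochastic ℝ m, h.eigenvalues = B *ᵥ fun i => (v i).re := by
  have hU := Unitary.star_mem h.eigenvectorUnitary.2
  refine ⟨_, map_normSq_mem_doublyStochastic hU, funext fun i => ?_⟩
  have hdiag := congrArg (fun M => (M i i).re) h.conjStarAlgAut_star_eigenvectorUnitary
  simp only [Unitary.conjStarAlgAut_apply] at hdiag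
  rw [re_mul_diagonal_mul_star_apply_self] at hdiag
  simpa using hdiag.symm

end Matrix.IsHermitian

theorem Cap_le_Cap_of_eigenvalues_eq_mulVec {m : Type*} [Fintype m] [DecidableEq m]
    {A B H : Matrix m m ℂ} (hA : A.IsHermitian) (hB : B.IsHermitian) (hH : H.IsHermitian)
    {M : Matrix m m ℝ} (hM : M ∈ doublyStochastic ℝ m)
    (hAB : hA.eigenvalues = M *ᵥ hB.eigenvalues) :
    Cap A H ≤ Cap B H := by
  set e := Fintype.equivFin m
  have hreindex : hA.eigenvalues ∘ e.symm = reindex e e M *ᵥ (hB.eigenvalues ∘ e.symm) := by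
    rw [hAB, reindex_apply, submatrix_mulVec_equiv, Equiv.symm_symm, Function.comp_assoc,
      e.symm_comp_self, Function.comp_id]
  rw [Cap, Cap, dif_pos hA, dif_pos hB, dif_pos hH, dif_pos hH, eigsDesc, eigsDesc, hreindex]
  exact cap_dsort_mulVec_le (antitone_dsort _) (reindex_mem_doublyStochastic hM) _

theorem cap_ge_cap_decoherent_general (d : ℕ) (ρ H : Matrix (Fin d) (Fin d) ℂ)
    (hρ : ρ.PosSemidef) (hH : H.IsHermitian) :
    Cap (Matrix.diagonal (fun i => ρ i i)) H ≤ Cap ρ H := by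
  have hτ : (diagonal fun i => ρ i i).IsHermitian :=
    isHermitian_diagonal_of_self_adjoint _ (funext fun i => hρ.isHermitian.apply i i)
  obtain ⟨Bρ, hBρ, hdiag⟩ := hρ.isHermitian.exists_re_diag_eq_mulVec_eigenvalues
  obtain ⟨Bτ, hBτ, hτ_eig⟩ := hτ.exists_eigenvalues_eq_mulVec_re_diag
  exact Cap_le_Cap_of_eigenvalues_eq_mulVec hτ hρ.isHermitian hH (mul_mem hBτ hBρ)
    (by rw [hτ_eig, hdiag, mulVec_mulVec])

/-- The capacity of a state dominates the capacity of its decoherent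
(diagonal) part. -/
theorem cap_ge_cap_decoherent (d : ℕ) (ρ H : Matrix (Fin d) (Fin d) ℂ)
    (hρ : ρ.PosSemidef) (htr : ρ.trace = 1) (hH : H.IsHermitian) :
    Cap (Matrix.diagonal (fun i => ρ i i)) H ≤ Cap ρ H :=
  cap_ge_cap_decoherent_general d ρ H hρ hH
end

section
/- For a diagonal two-qubit density matrix ρ_ic with diagonal entries ρ₁₁,...,ρ₄₄ whose descending rearrangement is α₁ ≥ α₂ ≥ α₃ ≥ α₄, and for the Hamiltonian H_AB = ε^A σ₃⊗I + ε^B I⊗σ₃ + γ σ₁⊗σ₁ with ε^A ≥ ε^B ≥ 0 and γ ≥ 0, one has C(ρ_ic; H_AB) ≥ C(ρ_A; ε^A σ₃) + C(ρ_B; ε^B σ₃), where ρ_A, ρ_B are the reduced states. -/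
open Matrix Finset
open scoped Kronecker

open scoped ComplexOrder

/-- The two-qubit Hamiltonian of Eq. (3). -/
noncomputable def HAB (eA eB g : ℝ) : Matrix (Fin 2 × Fin 2) (Fin 2 × Fin 2) ℂ :=
  (eA : ℂ) • (σ3 ⊗ₖ (1 : Matrix (Fin 2) (Fin 2) ℂ)) +
  (eB : ℂ) • ((1 : Matrix (Fin 2) (Fin 2) ℂ) ⊗ₖ σ3) +
  (g : ℂ) • (σ1 ⊗ₖ σ1)

/-! For a diagonal state every capacity is read off the descending rearrangement `α` of the
populations. The one-qubit capacities are `2 ε^A |x|` and `2 ε^B |y|`, with `x`, `y` the marginal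
population imbalances. Since `σ₁ ⊗ σ₁` only couples `|00⟩ ↔ |11⟩` and `|01⟩ ↔ |10⟩`, `H_AB` splits
into two blocks `a σ₃ + γ σ₁` with `a = ε^A ± ε^B`, so its spectrum is `±E₁, ±E₂` with
`E₁ = √((ε^A + ε^B)² + γ²) ≥ ε^A + ε^B` and `E₂ = √((ε^A - ε^B)² + γ²) ≥ ε^A - ε^B`, and the total
capacity is `2 E₁ (α₀ - α₃) + 2 E₂ (α₁ - α₂)`. It then suffices to write
`ε^A |x| + ε^B |y| = (ε^A - ε^B) |x| + ε^B (|x| + |y|)` and use `|x| ≤ α₀ + α₁ - α₂ - α₃`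
(`x` is a difference of two disjoint pair sums) and `|x| + |y| ≤ 2 (α₀ - α₃)` (`|x| + |y|` is
twice the difference of two populations). -/

open Polynomial

theorem Antitone.add_le_zero_add_one {n : ℕ} {f : Fin (n + 2) → ℝ} (hf : Antitone f)
    {i j : Fin (n + 2)} (hij : i ≠ j) : f i + f j ≤ f 0 + f 1 := by
  wlog hlt : i < j generalizing i j
  · rw [add_comm]
    exact this hij.symm (hij.lt_or_gt.resolve_left hlt)
  exact add_le_add (hf (Fin.zero_le i)) (hf (Fin.one_le_of_ne_zero (Fin.ne_zero_of_lt hlt)))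

section Dsort

variable {d n : ℕ}

theorem dsort_antitone (v : Fin d → ℝ) : Antitone (dsort v) :=
  fun _ _ hij => Tuple.monotone_sort v (Fin.rev_le_rev.mpr hij)

theorem dsort_eq_self_of_antitone {v : Fin d → ℝ} (hv : Antitone v) : dsort v = v := by
  have h : v ∘ Fin.revPerm = v ∘ Tuple.sort v :=
    Tuple.comp_sort_eq_comp_iff_monotone.mpr fun _ _ hij => hv (Fin.rev_le_rev.mpr hij)
  funext i
  simpa [dsort] using congrFun h.symm i.rev

theorem dsort_eq_of_map_eq {v w : Fin d → ℝ}
    (h : univ.val.map v = univ.val.map w) : dsort v = dsort w := by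
  rw [Fin.univ_val_map, Fin.univ_val_map, Multiset.coe_eq_coe] at h
  have hperm : (List.ofFn (v ∘ Tuple.sort v)).Perm <| List.ofFn (w ∘ Tuple.sort w) :=
    ((Equiv.Perm.ofFn_comp_perm _ v).trans h).trans (Equiv.Perm.ofFn_comp_perm _ w).symm
  have hsorted : List.ofFn (v ∘ Tuple.sort v) = List.ofFn (w ∘ Tuple.sort w) :=
    hperm.eq_of_sortedLE (Tuple.monotone_sort v).sortedLE_ofFn
      (Tuple.monotone_sort w).sortedLE_ofFn
  funext i
  exact congrFun (List.ofFn_injective hsorted) i.rev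

theorem exists_perm_apply_eq_dsort (v : Fin d → ℝ) :
    ∃ τ : Equiv.Perm (Fin d), ∀ i, v i = dsort v (τ i) :=
  ⟨(Tuple.sort v).symm.trans Fin.revPerm, fun i => by simp [dsort]⟩

theorem sum_dsort (v : Fin d → ℝ) : ∑ i, dsort v i = ∑ i, v i := by
  obtain ⟨τ, hτ⟩ := exists_perm_apply_eq_dsort v
  simp only [hτ, Equiv.sum_comp]

theorem apply_sub_apply_le_dsort (v : Fin (n + 1) → ℝ) (i j : Fin (n + 1)) :
    v i - v j ≤ dsort v 0 - dsort v (Fin.last n) := by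
  obtain ⟨τ, hτ⟩ := exists_perm_apply_eq_dsort v
  rw [hτ i, hτ j]
  exact sub_le_sub (dsort_antitone v (Fin.zero_le _)) (dsort_antitone v (Fin.le_last _))

theorem add_le_dsort_zero_add_dsort_one (v : Fin (n + 2) → ℝ) {i j : Fin (n + 2)}
    (hij : i ≠ j) : v i + v j ≤ dsort v 0 + dsort v 1 := by
  obtain ⟨τ, hτ⟩ := exists_perm_apply_eq_dsort v
  rw [hτ i, hτ j]
  exact (dsort_antitone v).add_le_zero_add_one (τ.injective.ne hij)

end Dsort

theorem isHermitian_diagonal_ofReal {m : Type*} [DecidableEq m] (f : m → ℝ) :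
    (diagonal fun i => ((f i : ℝ) : ℂ)).IsHermitian :=
  isHermitian_diagonal_of_self_adjoint _ (funext fun i => Complex.conj_ofReal (f i))

section Spectrum

variable {m : Type*} [Fintype m] [DecidableEq m]

theorem Cap_eq_cap_eigsDesc {ρ H : Matrix m m ℂ} (hρ : ρ.IsHermitian) (hH : H.IsHermitian) :
    Cap ρ H = cap (eigsDesc hρ) (eigsDesc hH) := by
  rw [Cap, dif_pos hρ, dif_pos hH]

theorem eigsDesc_eq_dsort {A : Matrix m m ℂ} (hA : A.IsHermitian)
    {v : Fin (Fintype.card m) → ℝ} (h : A.charpoly = ∏ i, (X - C ((v i : ℝ) : ℂ))) :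
    eigsDesc hA = dsort v := by
  apply dsort_eq_of_map_eq
  have hroots := hA.roots_charpoly_eq_eigenvalues
  rw [h, roots_prod _ _ (prod_ne_zero_iff.mpr fun i _ => X_sub_C_ne_zero _)] at hroots
  simp only [roots_X_sub_C, Multiset.bind_singleton] at hroots
  have hmap : (univ.val.map v).map ((↑) : ℝ → ℂ) = (univ.val.map hA.eigenvalues).map (↑) := by
    rw [Multiset.map_map, Multiset.map_map]
    exact hroots
  rw [← Multiset.map_map, Multiset.map_univ_val_equiv,
    Multiset.map_injective Complex.ofReal_injective hmap]

end Spectrum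

theorem cap_fin_two (lam eps : Fin 2 → ℝ) :
    cap lam eps = (eps 0 - eps 1) * (lam 0 - lam 1) := by
  simp only [cap, Fin.sum_univ_two, Fin.isValue, Fin.rev_zero, Fin.reduceLast, Fin.reduceRev]
  ring

theorem cap_fin_four (lam eps : Fin 4 → ℝ) :
    cap lam eps = (eps 0 - eps 3) * (lam 0 - lam 3) + (eps 1 - eps 2) * (lam 1 - lam 2) := by
  simp only [cap, Fin.sum_univ_four, Fin.isValue, Fin.rev_zero, Fin.reduceLast, Fin.reduceRev]
  ring

theorem dsort_fin_two (a b : ℝ) : dsort ![a, b] = ![max a b, min a b] := by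
  have hanti : Antitone ![max a b, min a b] := by simp
  rw [← dsort_eq_self_of_antitone hanti]
  apply dsort_eq_of_map_eq
  rcases le_total a b with h | h
  · simpa [max_eq_right h, min_eq_left h] using List.Perm.swap b a []
  · simp [max_eq_left h, min_eq_right h]

theorem smul_σ3_eq_diagonal (e : ℝ) :
    (e : ℂ) • σ3 = diagonal fun i => ((![e, -e] i : ℝ) : ℂ) := by
  ext i j
  fin_cases i <;> fin_cases j <;> simp [σ3]

theorem Cap_diagonal_smul_σ3 (a b e : ℝ) (he : 0 ≤ e) :
    Cap (diagonal fun i => ((![a, b] i : ℝ) : ℂ)) ((e : ℂ) • σ3) = 2 * e * |a - b| := by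
  have hanti : Antitone ![e, -e] := by simp; linarith
  rw [smul_σ3_eq_diagonal,
    Cap_eq_cap_eigsDesc (isHermitian_diagonal_ofReal _) (isHermitian_diagonal_ofReal _),
    eigsDesc_eq_dsort _ (charpoly_diagonal _), eigsDesc_eq_dsort _ (charpoly_diagonal _)]
  -- `eigsDesc` is indexed by `Fin (Fintype.card _)`, which is `Fin 2` only up to unfolding.
  change cap (d := 2) (dsort ![a, b]) (dsort ![e, -e]) = _
  rw [dsort_eq_self_of_antitone hanti, dsort_fin_two, cap_fin_two]
  simp only [cons_val_zero, cons_val_one, max_sub_min_eq_abs']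
  ring

def parityBlock (a g : ℝ) : Matrix (Fin 2) (Fin 2) ℂ := !![(a : ℂ), g; g, -a]

def parityEquiv : Fin 2 ⊕ Fin 2 ≃ Fin 2 × Fin 2 where
  toFun := Sum.elim ![(0, 0), (1, 1)] ![(0, 1), (1, 0)]
  invFun x := ![![.inl 0, .inr 0], ![.inr 1, .inl 1]] x.1 x.2
  left_inv := by decide
  right_inv := by decide

theorem HAB_eq_reindex_fromBlocks (eA eB g : ℝ) :
    HAB eA eB g = reindex parityEquiv parityEquiv
      (fromBlocks (parityBlock (eA + eB) g) 0 0 (parityBlock (eA - eB) g)) := by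
  ext ⟨i, j⟩ ⟨k, l⟩
  fin_cases i <;> fin_cases j <;> fin_cases k <;> fin_cases l <;>
    simp [HAB, σ1, σ3, parityEquiv, parityBlock] <;> ring

theorem isHermitian_parityBlock (a g : ℝ) : (parityBlock a g).IsHermitian := by
  ext i j
  fin_cases i <;> fin_cases j <;> simp [parityBlock]

theorem isHermitian_HAB (eA eB g : ℝ) : (HAB eA eB g).IsHermitian := by
  rw [HAB_eq_reindex_fromBlocks]
  exact ((isHermitian_parityBlock _ _).fromBlocks (by simp)
    (isHermitian_parityBlock _ _)).reindex _

theorem charpoly_parityBlock (a g : ℝ) :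
    (parityBlock a g).charpoly =
      (X - C ((√(a ^ 2 + g ^ 2) : ℝ) : ℂ)) * (X - C ((-√(a ^ 2 + g ^ 2) : ℝ) : ℂ)) := by
  have hsq : ((√(a ^ 2 + g ^ 2) : ℝ) : ℂ) ^ 2 = (a : ℂ) ^ 2 + (g : ℂ) ^ 2 := by
    rw [← Complex.ofReal_pow, Real.sq_sqrt (by positivity)]
    push_cast; ring
  rw [charpoly_fin_two, trace_fin_two, det_fin_two]
  simp only [parityBlock, of_apply, cons_val', cons_val_zero, cons_val_one, empty_val',
    cons_val_fin_one, Complex.ofReal_neg, C_neg]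
  rw [add_neg_cancel, show (a : ℂ) * -a - g * g = -((√(a ^ 2 + g ^ 2) : ℝ) : ℂ) ^ 2 by
    rw [hsq]; ring]
  simp only [C_0, zero_mul, sub_zero, C_neg, C_pow]
  ring

theorem charpoly_HAB (eA eB g : ℝ) :
    (HAB eA eB g).charpoly = ∏ i, (X - C ((![√((eA + eB) ^ 2 + g ^ 2), √((eA - eB) ^ 2 + g ^ 2),
      -√((eA - eB) ^ 2 + g ^ 2), -√((eA + eB) ^ 2 + g ^ 2)] i : ℝ) : ℂ)) := by
  rw [HAB_eq_reindex_fromBlocks, charpoly_reindex, charpoly_fromBlocks_zero₁₂,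
    charpoly_parityBlock, charpoly_parityBlock, Fin.prod_univ_four]
  simp only [cons_val_zero, cons_val_one, cons_val_two, cons_val_three, head_cons, tail_cons]
  ring

theorem Cap_diagonal_HAB (p00 p01 p10 p11 eA eB g : ℝ) (hA : 0 ≤ eA) (hB : 0 ≤ eB) :
    Cap (diagonal fun x : Fin 2 × Fin 2 => ((![![p00, p01], ![p10, p11]] x.1 x.2 : ℝ) : ℂ))
        (HAB eA eB g) =
      2 * √((eA + eB) ^ 2 + g ^ 2) *
          (dsort ![p00, p01, p10, p11] 0 - dsort ![p00, p01, p10, p11] 3) +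
        2 * √((eA - eB) ^ 2 + g ^ 2) *
          (dsort ![p00, p01, p10, p11] 1 - dsort ![p00, p01, p10, p11] 2) := by
  have hρ : (diagonal fun x : Fin 2 × Fin 2 =>
      ((![![p00, p01], ![p10, p11]] x.1 x.2 : ℝ) : ℂ)).charpoly =
        ∏ i, (X - C ((![p00, p01, p10, p11] i : ℝ) : ℂ)) := by
    rw [charpoly_diagonal, Fintype.prod_prod_type, Fin.prod_univ_two, Fin.prod_univ_two,
      Fin.prod_univ_two, Fin.prod_univ_four]
    simp only [cons_val_zero, cons_val_one, cons_val_two, cons_val_three, head_cons, tail_cons]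
    ring
  have hE : √((eA - eB) ^ 2 + g ^ 2) ≤ √((eA + eB) ^ 2 + g ^ 2) :=
    Real.sqrt_le_sqrt (by nlinarith)
  have hanti : Antitone ![√((eA + eB) ^ 2 + g ^ 2), √((eA - eB) ^ 2 + g ^ 2),
      -√((eA - eB) ^ 2 + g ^ 2), -√((eA + eB) ^ 2 + g ^ 2)] := by
    simp [hE, Real.sqrt_nonneg]
  rw [Cap_eq_cap_eigsDesc (isHermitian_diagonal_ofReal _) (isHermitian_HAB eA eB g),
    eigsDesc_eq_dsort _ hρ, eigsDesc_eq_dsort _ (charpoly_HAB eA eB g)]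
  change cap (d := 4) (dsort (d := 4) _) (dsort (d := 4) _) = _
  rw [dsort_eq_self_of_antitone hanti, cap_fin_four]
  simp only [cons_val_zero, cons_val_one, cons_val_two, cons_val_three, head_cons, tail_cons]
  ring

theorem weighted_abs_marginals_le_dsort (v : Fin 4 → ℝ) {eA eB : ℝ} (hAB : eB ≤ eA)
    (hB : 0 ≤ eB) :
    eA * |v 0 + v 1 - (v 2 + v 3)| + eB * |v 0 + v 2 - (v 1 + v 3)| ≤
      (eA + eB) * (dsort v 0 - dsort v 3) + (eA - eB) * (dsort v 1 - dsort v 2) := by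
  set α := dsort v
  have hsum : v 0 + v 1 + v 2 + v 3 = α 0 + α 1 + α 2 + α 3 := by
    simpa [Fin.sum_univ_four] using (sum_dsort v).symm
  have hpair : ∀ i j : Fin 4, i ≠ j → v i + v j ≤ α 0 + α 1 :=
    fun _ _ => add_le_dsort_zero_add_dsort_one v
  have hgap : ∀ i j, v i - v j ≤ α 0 - α 3 := apply_sub_apply_le_dsort v
  have hx : |v 0 + v 1 - (v 2 + v 3)| ≤ α 0 + α 1 - (α 2 + α 3) :=
    abs_sub_le_iff.mpr ⟨by linarith [hpair 0 1 (by decide)], by linarith [hpair 2 3 (by decide)]⟩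
  have hxy : |v 0 + v 1 - (v 2 + v 3)| + |v 0 + v 2 - (v 1 + v 3)| ≤ 2 * (α 0 - α 3) := by
    rcases abs_cases (v 0 + v 1 - (v 2 + v 3)) with ⟨hx, -⟩ | ⟨hx, -⟩ <;>
    rcases abs_cases (v 0 + v 2 - (v 1 + v 3)) with ⟨hy, -⟩ | ⟨hy, -⟩ <;>
    linarith [hgap 0 3, hgap 3 0, hgap 1 2, hgap 2 1]
  calc eA * |v 0 + v 1 - (v 2 + v 3)| + eB * |v 0 + v 2 - (v 1 + v 3)|
      = (eA - eB) * |v 0 + v 1 - (v 2 + v 3)|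
        + eB * (|v 0 + v 1 - (v 2 + v 3)| + |v 0 + v 2 - (v 1 + v 3)|) := by ring
    _ ≤ (eA - eB) * (α 0 + α 1 - (α 2 + α 3)) + eB * (2 * (α 0 - α 3)) := by
      gcongr
    _ = (eA + eB) * (α 0 - α 3) + (eA - eB) * (α 1 - α 2) := by ring

theorem incoherent_capacity_monogamy_general (p00 p01 p10 p11 eA eB g : ℝ)
    (hAB : eA ≥ eB) (hB : eB ≥ 0) :
    Cap (Matrix.diagonal (fun a : Fin 2 => ((![p00 + p01, p10 + p11] a : ℝ) : ℂ)))
        ((eA : ℂ) • σ3) +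
    Cap (Matrix.diagonal (fun b : Fin 2 => ((![p00 + p10, p01 + p11] b : ℝ) : ℂ)))
        ((eB : ℂ) • σ3) ≤
    Cap (Matrix.diagonal (fun x : Fin 2 × Fin 2 => ((![![p00, p01], ![p10, p11]] x.1 x.2 : ℝ) : ℂ)))
        (HAB eA eB g) := by
  have hA : 0 ≤ eA := hB.trans hAB
  have hmarg := weighted_abs_marginals_le_dsort ![p00, p01, p10, p11] hAB hB
  simp only [cons_val_zero, cons_val_one, cons_val_two, cons_val_three, head_cons,
    tail_cons] at hmarg
  rw [Cap_diagonal_smul_σ3 _ _ _ hA, Cap_diagonal_smul_σ3 _ _ _ hB,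
    Cap_diagonal_HAB _ _ _ _ _ _ _ hA hB]
  set α := dsort ![p00, p01, p10, p11]
  have hE1 : eA + eB ≤ √((eA + eB) ^ 2 + g ^ 2) := Real.le_sqrt_of_sq_le (by nlinarith)
  have hE2 : eA - eB ≤ √((eA - eB) ^ 2 + g ^ 2) := Real.le_sqrt_of_sq_le (by nlinarith)
  have hgap03 : 0 ≤ α 0 - α 3 := sub_nonneg.mpr (dsort_antitone _ (Fin.zero_le _))
  have hgap12 : 0 ≤ α 1 - α 2 := sub_nonneg.mpr (dsort_antitone _ (by decide))
  calc 2 * eA * |p00 + p01 - (p10 + p11)| + 2 * eB * |p00 + p10 - (p01 + p11)|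
      ≤ 2 * ((eA + eB) * (α 0 - α 3) + (eA - eB) * (α 1 - α 2)) := by linarith
    _ ≤ 2 * (√((eA + eB) ^ 2 + g ^ 2) * (α 0 - α 3) + √((eA - eB) ^ 2 + g ^ 2) * (α 1 - α 2)) := by
      gcongr
    _ = _ := by ring

/-- Lemma 2: for a diagonal (incoherent) two-qubit state, the sum of the
subsystem capacities is bounded by the total capacity. -/
theorem incoherent_capacity_monogamy (p00 p01 p10 p11 eA eB g : ℝ)
    (h00 : 0 ≤ p00) (h01 : 0 ≤ p01) (h10 : 0 ≤ p10) (h11 : 0 ≤ p11)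
    (hsum : p00 + p01 + p10 + p11 = 1)
    (hAB : eA ≥ eB) (hB : eB ≥ 0) (hg : 0 ≤ g) :
    Cap (Matrix.diagonal (fun a : Fin 2 => ((![p00 + p01, p10 + p11] a : ℝ) : ℂ)))
        ((eA : ℂ) • σ3) +
    Cap (Matrix.diagonal (fun b : Fin 2 => ((![p00 + p10, p01 + p11] b : ℝ) : ℂ)))
        ((eB : ℂ) • σ3) ≤
    Cap (Matrix.diagonal (fun x : Fin 2 × Fin 2 => ((![![p00, p01], ![p10, p11]] x.1 x.2 : ℝ) : ℂ)))
        (HAB eA eB g) :=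
  incoherent_capacity_monogamy_general p00 p01 p10 p11 eA eB g hAB hB
end
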